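/- arXiv:1202.2076 — 3 statements merged into one kernel-verified Lean document; each statement's English description precedes it below -/
import Mathlib

section
/- For β ∈ (0,1], the function ψ_β(x) := (φ_β(x) − x)/((1 − x)·φ_β(x)), where φ_β(x) := ((1+x)/(1+(1+β)x))^{1/x − 1}, defined for x > 0, x ≠ 1, extends to a continuous function on [0,∞). -/
noncomputable def phi (β x : ℝ) : ℝ := ((1 + x) / (1 + (1 + β) * x)) ^ (1 / x - 1)

noncomputable def psi (β x : ℝ) : ℝ := (phi β x - x) / ((1 - x) * phi β x)

/-!
With `h = dslope (phiLog β) 0`, the divided difference at `0` of the logarithm of the base of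
`phi`, one has `phi β x = exp ((1 - x) * h x)` for `x > 0`. Since `h` is continuous on `[0, ∞)`,
`x / phi β x` extends to a function `G = divPhi β` that is continuous on `[0, ∞)` and
differentiable at `1`, with `G 1 = 1`. Then `psi β x = (G x - G 1) / (x - 1)`, so the divided
difference `dslope G 1` is the continuous extension of `psi β`.
-/

open Real Set

theorem ContinuousOn.dslope {𝕜 E : Type*} [NontriviallyNormedField 𝕜] [NormedAddCommGroup E]
    [NormedSpace 𝕜 E] {f : 𝕜 → E} {s : Set 𝕜} {a : 𝕜} (hf : ContinuousOn f s)
    (ha : DifferentiableAt 𝕜 f a) : ContinuousOn (dslope f a) s := by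
  intro x hx
  rcases eq_or_ne x a with rfl | hxa
  · exact (continuousAt_dslope_same.2 ha).continuousWithinAt
  · exact (continuousWithinAt_dslope_of_ne hxa).2 (hf x hx)

noncomputable def phiLog (β x : ℝ) : ℝ := log (1 + x) - log (1 + (1 + β) * x)

noncomputable def divPhi (β x : ℝ) : ℝ := x * exp ((x - 1) * dslope (phiLog β) 0 x)

section

variable {β x : ℝ}

lemma one_add_mul_pos (hβ : -1 ≤ β) (hx : 0 ≤ x) : 0 < 1 + (1 + β) * x := by nlinarith

lemma phi_base_pos (hβ : -1 ≤ β) (hx : 0 ≤ x) : 0 < (1 + x) / (1 + (1 + β) * x) :=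
  div_pos (by linarith) (one_add_mul_pos hβ hx)

lemma phi_pos (hβ : -1 ≤ β) (hx : 0 ≤ x) : 0 < phi β x :=
  rpow_pos_of_pos (phi_base_pos hβ hx) _

lemma phiLog_zero : phiLog β 0 = 0 := by simp [phiLog]

lemma differentiableAt_phiLog (hβ : -1 ≤ β) (hx : 0 ≤ x) : DifferentiableAt ℝ (phiLog β) x := by
  have h₁ : 1 + x ≠ 0 := by positivity
  have h₂ := (one_add_mul_pos hβ hx).ne'
  unfold phiLog
  fun_prop (disch := assumption)

lemma continuousOn_divPhi (hβ : -1 ≤ β) : ContinuousOn (divPhi β) (Ici 0) := by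
  have hL : ContinuousOn (dslope (phiLog β) 0) (Ici 0) :=
    ContinuousOn.dslope (fun x hx ↦ (differentiableAt_phiLog hβ hx).continuousAt.continuousWithinAt)
      (differentiableAt_phiLog hβ le_rfl)
  unfold divPhi
  fun_prop

lemma differentiableAt_divPhi_one (hβ : -1 ≤ β) : DifferentiableAt ℝ (divPhi β) 1 := by
  have hL : DifferentiableAt ℝ (dslope (phiLog β) 0) 1 :=
    (differentiableAt_dslope_of_ne one_ne_zero).2 (differentiableAt_phiLog hβ zero_le_one)
  unfold divPhi
  fun_prop

lemma divPhi_one : divPhi β 1 = 1 := by simp [divPhi]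

lemma divPhi_eq (hβ : -1 ≤ β) (hx : 0 < x) : divPhi β x = x / phi β x := by
  have hlog : log ((1 + x) / (1 + (1 + β) * x)) = phiLog β x :=
    log_div (by linarith) (one_add_mul_pos hβ hx.le).ne'
  rw [divPhi, phi, rpow_def_of_pos (phi_base_pos hβ hx.le), hlog, dslope_of_ne _ hx.ne',
    slope_def_field, phiLog_zero, div_eq_mul_inv x, ← exp_neg, sub_zero, sub_zero]
  congr 2
  field_simp
  ring

lemma psi_eq_dslope_divPhi (hβ : -1 ≤ β) (hx : 0 < x) (hx₁ : x ≠ 1) :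
    psi β x = dslope (divPhi β) 1 x := by
  have hφ := (phi_pos hβ hx.le).ne'
  have h₁ : x - 1 ≠ 0 := sub_ne_zero.2 hx₁
  have h₂ : 1 - x ≠ 0 := sub_ne_zero.2 hx₁.symm
  rw [dslope_of_ne _ hx₁, slope_def_field, divPhi_eq hβ hx, divPhi_one, psi]
  field_simp
  ring

end

theorem psi_extends_continuously (β : ℝ) (hβ : β ∈ Set.Ioc (0 : ℝ) 1) :
    ∃ g : ℝ → ℝ, ContinuousOn g (Set.Ici (0 : ℝ)) ∧
      ∀ x : ℝ, 0 < x → x ≠ 1 → g x = psi β x := by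
  have hβ' : -1 ≤ β := by linarith [hβ.1]
  exact ⟨dslope (divPhi β) 1, (continuousOn_divPhi hβ').dslope (differentiableAt_divPhi_one hβ'),
    fun x hx hx₁ ↦ (psi_eq_dslope_divPhi hβ' hx hx₁).symm⟩
end

section
/- For every β ∈ (0,1], the function ψ_β is (weakly) decreasing on [0,∞). -/
/-!
Put `c = 1 + β`. Then `x / φ_β(x) = F(x) := x · exp((1/x − 1) log((1 + c x)/(1 + x)))` and
`F(1) = 1`, so for `x ≠ 1` the value `ψ_β(x) = (F(x) − 1)/(x − 1)` is the slope of the chord of `F`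
from `1` to `x`. It therefore suffices that `F` is concave on `[0, ∞)`. Writing `F = x e^E`, one has
`F'' = e^E (x E'² + 2E' + x E'')`, and the sign of the bracket follows from the two bounds
`1 − 1/t ≤ log t ≤ (t − 1/t)/2` (for `t ≥ 1`) at `t = (1 + c x)/(1 + x)`. Continuity of `g`
carries the monotonicity across the points `0` and `1`.
-/

open Real Set Filter Topology

theorem Real.log_le_half_sub_inv {t : ℝ} (ht : 1 ≤ t) : log t ≤ (t - t⁻¹) / 2 := by
  rw [← sinh_log (by linarith)]
  exact self_le_sinh_iff.2 (log_nonneg ht)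

theorem AntitoneOn.closure_of_continuousOn {α β : Type*} [TopologicalSpace α] [LinearOrder α]
    [OrderTopology α] [TopologicalSpace β] [Preorder β] [OrderClosedTopology β] {f : α → β}
    {s : Set α} (hf : AntitoneOn f s) (hc : ContinuousOn f (closure s)) :
    AntitoneOn f (closure s) := by
  have tendsto_within {a} (ha : a ∈ closure s) : Tendsto f (𝓝[s] a) (𝓝 (f a)) :=
    ((hc a ha).mono subset_closure).tendsto
  have neBot {a} (ha : a ∈ closure s) : (𝓝[s] a).NeBot := mem_closure_iff_nhdsWithin_neBot.1 ha
  have anti_right : ∀ x ∈ s, ∀ b ∈ closure s, x < b → f b ≤ f x := by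
    intro x hx b hb hxb
    have := neBot hb
    refine le_of_tendsto (tendsto_within hb) ?_
    filter_upwards [self_mem_nhdsWithin, nhdsWithin_le_nhds (Ioi_mem_nhds hxb)] with y hy hxy
    exact hf hx hy (le_of_lt hxy)
  intro a ha b hb hab
  rcases hab.eq_or_lt with rfl | hab
  · exact le_rfl
  have := neBot ha
  refine ge_of_tendsto (tendsto_within ha) ?_
  filter_upwards [self_mem_nhdsWithin, nhdsWithin_le_nhds (Iio_mem_nhds hab)] with x hx hxb
  exact anti_right x hx b hb hxb

noncomputable def logRatio (c x : ℝ) : ℝ := log (1 + c * x) - log (1 + x)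

-- For `x > 0` and `c = 1 + β`: `logInvPhi c x = -log (phi β x)` and `xDivPhi c x = x / phi β x`.
noncomputable def logInvPhi (c x : ℝ) : ℝ := (x⁻¹ - 1) * logRatio c x

noncomputable def logInvPhiDeriv (c x : ℝ) : ℝ :=
  -(x ^ 2)⁻¹ * logRatio c x + (x⁻¹ - 1) * (c * (1 + c * x)⁻¹ - (1 + x)⁻¹)

noncomputable def logInvPhiDeriv2 (c x : ℝ) : ℝ :=
  2 / x ^ 3 * logRatio c x - 2 / x ^ 2 * (c * (1 + c * x)⁻¹ - (1 + x)⁻¹)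
    + (x⁻¹ - 1) * ((1 + x)⁻¹ ^ 2 - c ^ 2 * (1 + c * x)⁻¹ ^ 2)

noncomputable def xDivPhi (c x : ℝ) : ℝ := x * exp (logInvPhi c x)

noncomputable def xDivPhiDeriv (c x : ℝ) : ℝ := exp (logInvPhi c x) * (1 + x * logInvPhiDeriv c x)

section

variable {c x : ℝ}

theorem hasDerivAt_logRatio (h1 : 1 + c * x ≠ 0) (h2 : 1 + x ≠ 0) :
    HasDerivAt (logRatio c) (c * (1 + c * x)⁻¹ - (1 + x)⁻¹) x := by
  have d1 : HasDerivAt (fun y => 1 + c * y) c x := by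
    simpa using ((hasDerivAt_id x).const_mul c).const_add 1
  have d2 : HasDerivAt (fun y => 1 + y) 1 x := (hasDerivAt_id x).const_add 1
  refine ((d1.log h1).sub (d2.log h2)).congr_deriv ?_
  ring

theorem hasDerivAt_logInvPhi (hx : x ≠ 0) (h1 : 1 + c * x ≠ 0) (h2 : 1 + x ≠ 0) :
    HasDerivAt (logInvPhi c) (logInvPhiDeriv c x) x :=
  ((hasDerivAt_inv hx).sub_const 1).mul (hasDerivAt_logRatio h1 h2)

theorem hasDerivAt_logInvPhiDeriv (hx : x ≠ 0) (h1 : 1 + c * x ≠ 0) (h2 : 1 + x ≠ 0) :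
    HasDerivAt (logInvPhiDeriv c) (logInvPhiDeriv2 c x) x := by
  have d1 : HasDerivAt (fun y => 1 + c * y) c x := by
    simpa using ((hasDerivAt_id x).const_mul c).const_add 1
  have d2 : HasDerivAt (fun y => 1 + y) 1 x := (hasDerivAt_id x).const_add 1
  have hA : HasDerivAt (fun y => -(y ^ 2)⁻¹) (-(-(2 * x ^ 1) / (x ^ 2) ^ 2)) x :=
    ((hasDerivAt_pow 2 x).inv (pow_ne_zero 2 hx)).neg
  have hC : HasDerivAt (fun y => y⁻¹ - 1) (-(x ^ 2)⁻¹) x := (hasDerivAt_inv hx).sub_const 1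
  have hD : HasDerivAt (fun y => c * (1 + c * y)⁻¹ - (1 + y)⁻¹)
      (c * (-c / (1 + c * x) ^ 2) - -1 / (1 + x) ^ 2) x :=
    ((d1.inv h1).const_mul c).sub (d2.inv h2)
  refine ((hA.mul (hasDerivAt_logRatio h1 h2)).add (hC.mul hD)).congr_deriv ?_
  unfold logInvPhiDeriv2
  field_simp
  ring

theorem hasDerivAt_xDivPhi (hx : x ≠ 0) (h1 : 1 + c * x ≠ 0) (h2 : 1 + x ≠ 0) :
    HasDerivAt (xDivPhi c) (xDivPhiDeriv c x) x := by
  refine ((hasDerivAt_id x).mul (hasDerivAt_logInvPhi hx h1 h2).exp).congr_deriv ?_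
  simp only [xDivPhiDeriv, id_eq]
  ring

theorem hasDerivAt_xDivPhiDeriv (hx : x ≠ 0) (h1 : 1 + c * x ≠ 0) (h2 : 1 + x ≠ 0) :
    HasDerivAt (xDivPhiDeriv c)
      (exp (logInvPhi c x) * (x * logInvPhiDeriv c x ^ 2 + 2 * logInvPhiDeriv c x
        + x * logInvPhiDeriv2 c x)) x := by
  refine ((hasDerivAt_logInvPhi hx h1 h2).exp.mul
    (((hasDerivAt_id x).mul (hasDerivAt_logInvPhiDeriv hx h1 h2)).const_add 1)).congr_deriv ?_
  simp only [Pi.mul_apply, id_eq]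
  ring

theorem logRatio_eq_log_div (h1 : 0 < 1 + c * x) (h2 : 0 < 1 + x) :
    logRatio c x = log ((1 + c * x) / (1 + x)) :=
  (log_div h1.ne' h2.ne').symm

theorem sub_one_mul_le_logRatio_mul (h1 : 0 < 1 + c * x) (h2 : 0 < 1 + x) :
    (c - 1) * x * (1 + x) ≤ logRatio c x * ((1 + x) * (1 + c * x)) := by
  have h := one_sub_inv_le_log_of_pos (div_pos h1 h2)
  rw [← logRatio_eq_log_div h1 h2, inv_div] at h
  calc (c - 1) * x * (1 + x) = (1 - (1 + x) / (1 + c * x)) * ((1 + x) * (1 + c * x)) := by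
        field_simp; ring
    _ ≤ _ := by gcongr

theorem logRatio_mul_le (hc : 1 ≤ c) (hx : 0 ≤ x) :
    logRatio c x * ((1 + x) * (1 + c * x)) ≤ (c - 1) * x * (2 + (c + 1) * x) / 2 := by
  have h1 : 0 < 1 + c * x := by nlinarith
  have h2 : 0 < 1 + x := by linarith
  have h := log_le_half_sub_inv ((one_le_div h2).2 (by nlinarith : 1 + x ≤ 1 + c * x))
  rw [← logRatio_eq_log_div h1 h2, inv_div] at h
  calc logRatio c x * ((1 + x) * (1 + c * x))
      ≤ ((1 + c * x) / (1 + x) - (1 + x) / (1 + c * x)) / 2 * ((1 + x) * (1 + c * x)) := by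
        gcongr
    _ = _ := by field_simp; ring

theorem xDivPhi_deriv2_factor_eq (hx : x ≠ 0) (h1 : 1 + c * x ≠ 0) (h2 : 1 + x ≠ 0) :
    x * logInvPhiDeriv c x ^ 2 + 2 * logInvPhiDeriv c x + x * logInvPhiDeriv2 c x =
      ((logRatio c x * ((1 + x) * (1 + c * x)) - (c - 1) * x * (1 - x)) ^ 2
        - x ^ 3 * (c - 1) * ((c + 3) + (3 * c + 1) * x))
        / (x ^ 3 * ((1 + x) * (1 + c * x)) ^ 2) := by
  -- the side condition in the form `field_simp` asks for
  have h1' : 1 + x * c ≠ 0 := by rwa [mul_comm]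
  simp only [logInvPhiDeriv, logInvPhiDeriv2]
  field_simp
  ring

theorem xDivPhi_deriv2_factor_nonpos (hc1 : 1 ≤ c) (hc2 : c ≤ 2) (hx : 0 < x) :
    x * logInvPhiDeriv c x ^ 2 + 2 * logInvPhiDeriv c x + x * logInvPhiDeriv2 c x ≤ 0 := by
  have h1 : 0 < 1 + c * x := by nlinarith
  have h2 : 0 < 1 + x := by linarith
  have hlo := sub_one_mul_le_logRatio_mul h1 h2
  have hhi := logRatio_mul_le hc1 hx.le
  set t := logRatio c x * ((1 + x) * (1 + c * x)) - (c - 1) * x * (1 - x)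
  have ht0 : 0 ≤ t := by nlinarith [mul_nonneg (sub_nonneg.2 hc1) (sq_nonneg x)]
  have ht : t ≤ (c - 1) * (c + 3) * x ^ 2 / 2 := by nlinarith
  -- `hsq` reduces to `(c - 1) (c + 3)² / 4 ≤ 3 c + 1`, which holds for `c ≤ 2`.
  have hcubic : 0 ≤ (2 - c) * (c ^ 2 + 7 * c + 5) + 3 := by nlinarith
  have hsq : t ^ 2 ≤ x ^ 3 * (c - 1) * ((c + 3) + (3 * c + 1) * x) :=
    calc t ^ 2 ≤ ((c - 1) * (c + 3) * x ^ 2 / 2) ^ 2 := by gcongr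
      _ ≤ _ := by
        nlinarith [pow_pos hx 3, mul_nonneg (mul_nonneg (pow_pos hx 4).le (sub_nonneg.2 hc1)) hcubic]
  rw [xDivPhi_deriv2_factor_eq hx.ne' h1.ne' h2.ne']
  exact div_nonpos_of_nonpos_of_nonneg (sub_nonpos.2 hsq) (by positivity)

end

theorem closure_Ioi_sdiff_singleton (a b : ℝ) : closure (Ioi a \ {b}) = Ici a := by
  refine subset_antisymm ((closure_mono sdiff_subset).trans (closure_Ioi a).subset) ?_
  rw [← closure_Ioi]
  exact closure_minimal ((dense_compl_singleton b).open_subset_closure_inter isOpen_Ioi)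
    isClosed_closure

theorem tendsto_xDivPhi_zero (c : ℝ) : Tendsto (xDivPhi c) (𝓝[>] 0) (𝓝 0) := by
  have hl : HasDerivAt (logRatio c) (c - 1) 0 := by
    simpa using hasDerivAt_logRatio (c := c) (x := 0) (by simp) (by simp)
  have hslope : Tendsto (fun t => t⁻¹ * logRatio c t) (𝓝[>] 0) (𝓝 (c - 1)) := by
    simpa [logRatio] using hl.tendsto_slope_zero_right
  have hl0 : Tendsto (logRatio c) (𝓝[>] 0) (𝓝 0) := by
    simpa [logRatio] using hl.continuousAt.tendsto.mono_left nhdsWithin_le_nhds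
  have hexp : Tendsto (logInvPhi c) (𝓝[>] 0) (𝓝 (c - 1)) := by
    have : logInvPhi c = fun t => t⁻¹ * logRatio c t - logRatio c t :=
      funext fun t => by rw [logInvPhi, sub_mul, one_mul]
    simpa [this] using hslope.sub hl0
  have := (tendsto_nhdsWithin_of_tendsto_nhds tendsto_id).mul hexp.rexp
  rwa [zero_mul] at this

theorem continuousOn_xDivPhi {c : ℝ} (hc : 0 ≤ c) : ContinuousOn (xDivPhi c) (Ici 0) := by
  intro x hx
  rcases (mem_Ici.1 hx).eq_or_lt with rfl | hx
  · rw [← continuousWithinAt_Ioi_iff_Ici, ContinuousWithinAt]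
    simpa [xDivPhi] using tendsto_xDivPhi_zero c
  · exact (hasDerivAt_xDivPhi hx.ne' (by positivity) (by positivity)).continuousAt.continuousWithinAt

theorem concaveOn_xDivPhi {c : ℝ} (hc1 : 1 ≤ c) (hc2 : c ≤ 2) :
    ConcaveOn ℝ (Ici 0) (xDivPhi c) := by
  refine concaveOn_of_hasDerivWithinAt2_nonpos (convex_Ici 0) (continuousOn_xDivPhi (by linarith))
    (f' := xDivPhiDeriv c) (f'' := fun x => exp (logInvPhi c x) *
      (x * logInvPhiDeriv c x ^ 2 + 2 * logInvPhiDeriv c x + x * logInvPhiDeriv2 c x))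
    (fun x hx => ?_) (fun x hx => ?_) (fun x hx => ?_) <;>
    rw [interior_Ici, mem_Ioi] at hx
  · exact (hasDerivAt_xDivPhi hx.ne' (by positivity) (by positivity)).hasDerivWithinAt
  · exact (hasDerivAt_xDivPhiDeriv hx.ne' (by positivity) (by positivity)).hasDerivWithinAt
  · exact mul_nonpos_of_nonneg_of_nonpos (exp_pos _).le (xDivPhi_deriv2_factor_nonpos hc1 hc2 hx)

theorem psi_eq_slope {β x : ℝ} (hβ : -1 ≤ β) (hx : 0 < x) (hx1 : x ≠ 1) :
    psi β x = slope (xDivPhi (1 + β)) 1 x := by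
  have h1 : 0 < 1 + (1 + β) * x := by nlinarith
  have h2 : 0 < 1 + x := by linarith
  have hphi : phi β x = exp (-logInvPhi (1 + β) x) := by
    rw [phi, rpow_def_of_pos (div_pos h2 h1), ← inv_div, log_inv, ← logRatio_eq_log_div h1 h2,
      logInvPhi, one_div]
    ring_nf
  have hone : xDivPhi (1 + β) 1 = 1 := by simp [xDivPhi, logInvPhi]
  have hx1' : x - 1 ≠ 0 := sub_ne_zero.2 hx1
  have hx1'' : 1 - x ≠ 0 := sub_ne_zero.2 hx1.symm
  rw [psi, hphi, slope_def_field, hone, xDivPhi, exp_neg]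
  field_simp
  ring

theorem psi_decreasing (β : ℝ) (hβ : β ∈ Set.Ioc (0 : ℝ) 1) (g : ℝ → ℝ)
    (hg_cont : ContinuousOn g (Set.Ici (0 : ℝ)))
    (hg_eq : ∀ x : ℝ, 0 < x → x ≠ 1 → g x = psi β x) :
    AntitoneOn g (Set.Ici (0 : ℝ)) := by
  obtain ⟨hβ0, hβ1⟩ := hβ
  have hslope : AntitoneOn (slope (xDivPhi (1 + β)) 1) (Ioi 0 \ {1}) :=
    ((concaveOn_xDivPhi (by linarith) (by linarith)).slope_anti (by simp)).mono
      (sdiff_subset_sdiff_left Ioi_subset_Ici_self)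
  have hg : AntitoneOn g (Ioi 0 \ {1}) := hslope.congr fun x ⟨hx, hx1⟩ =>
    (hg_eq x hx hx1).trans (psi_eq_slope (by linarith) hx hx1) |>.symm
  rw [← closure_Ioi_sdiff_singleton 0 1] at hg_cont ⊢
  exact hg.closure_of_continuousOn hg_cont
end

section
/- Let r = 0, λ > 0, b > 0, γ > b, and let w be concave and differentiable on (0, γ−b) with w' ≥ −1. If v'(u) = ∫_u^γ (e^{(u−x)/b}/b) w'(x−b) dx − e^{(u−γ)/b} on (b,γ], then v'(u) − w'(u−b) ≤ −e^{(u−γ)/b}(w'(u−b)+1) ≤ 0 for all u ∈ (b,γ]. -/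
/-! On `[u, γ]` the kernel `e^{(u-x)/b}/b` is nonnegative with total mass `1 - e^{(u-γ)/b}`,
and `x ↦ w1 (x - b)` is antitone, so the integral is at most `(1 - e^{(u-γ)/b}) w1 (u - b)`.
Both inequalities then reduce to `w1 (u - b) + 1 ≥ 0`. -/

open intervalIntegral Set

lemma integral_exp_sub_div_div (b u γ : ℝ) :
    (∫ x in u..γ, Real.exp ((u - x) / b) / b) = 1 - Real.exp ((u - γ) / b) := by
  have hderiv : ∀ x ∈ uIcc u γ,
      HasDerivAt (fun x => -Real.exp ((u - x) / b)) (Real.exp ((u - x) / b) / b) x := by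
    intro x _
    have hlin : HasDerivAt (fun x : ℝ => (u - x) / b) (-1 / b) x := by
      simpa using ((hasDerivAt_id x).const_sub u).div_const b
    have hneg : HasDerivAt (fun x => -Real.exp ((u - x) / b)) _ x := hlin.exp.neg
    convert hneg using 1
    ring
  have hcont : ContinuousOn (fun x => Real.exp ((u - x) / b) / b) (uIcc u γ) := by fun_prop
  rw [integral_eq_sub_of_hasDerivAt hderiv hcont.intervalIntegrable, sub_self, zero_div,
    Real.exp_zero]
  ring

lemma integral_mul_le_integral_mul_of_antitoneOn {K f : ℝ → ℝ} {u γ : ℝ} (huγ : u ≤ γ)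
    (hK : ContinuousOn K (Icc u γ)) (hK_nonneg : ∀ x ∈ Icc u γ, 0 ≤ K x)
    (hf : AntitoneOn f (Icc u γ)) :
    (∫ x in u..γ, K x * f x) ≤ (∫ x in u..γ, K x) * f u := by
  have hK' : ContinuousOn K (uIcc u γ) := by rwa [uIcc_of_le huγ]
  have hf' : AntitoneOn f (uIcc u γ) := by rwa [uIcc_of_le huγ]
  rw [← integral_mul_const]
  refine integral_mono_on huγ (hf'.intervalIntegrable.continuousOn_mul hK')
    (hK'.mul continuousOn_const).intervalIntegrable fun x hx => ?_
  exact mul_le_mul_of_nonneg_left (hf ⟨le_rfl, huγ⟩ hx hx.1) (hK_nonneg x hx)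

theorem patient_case_propz_general (b γ : ℝ)
    (hb : 0 < b)
    (w1 v' : ℝ → ℝ)
    (hmono : AntitoneOn w1 (Set.Ioc 0 (γ - b)))
    (hge : ∀ x ∈ Set.Ioc (0 : ℝ) (γ - b), -1 ≤ w1 x)
    (hv' : ∀ u ∈ Set.Ioc b γ, v' u =
      (∫ x in u..γ, Real.exp ((u - x) / b) / b * w1 (x - b)) - Real.exp ((u - γ) / b)) :
    ∀ u ∈ Set.Ioc b γ,
      v' u - w1 (u - b) ≤ -Real.exp ((u - γ) / b) * (w1 (u - b) + 1) ∧
        -Real.exp ((u - γ) / b) * (w1 (u - b) + 1) ≤ 0 := by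
  intro u hu
  have hshift : ∀ x ∈ Icc u γ, x - b ∈ Ioc (0 : ℝ) (γ - b) := fun x hx =>
    ⟨by linarith [hu.1, hx.1], by linarith [hx.2]⟩
  have hw1_le : (∫ x in u..γ, Real.exp ((u - x) / b) / b * w1 (x - b)) ≤
      (1 - Real.exp ((u - γ) / b)) * w1 (u - b) := by
    rw [← integral_exp_sub_div_div b u γ]
    exact integral_mul_le_integral_mul_of_antitoneOn hu.2 (by fun_prop)
      (fun x _ => by positivity)
      (fun x hx y hy hxy => hmono (hshift x hx) (hshift y hy) (by linarith))
  have hw1_ge : -1 ≤ w1 (u - b) := hge _ (hshift u ⟨le_rfl, hu.2⟩)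
  have hexp_pos := Real.exp_pos ((u - γ) / b)
  rw [hv' u hu]
  constructor <;> nlinarith

theorem patient_case_propz (lam b γ : ℝ)
    (hlam : 0 < lam) (hb : 0 < b) (hγ : b < γ)
    (w1 v' : ℝ → ℝ)
    (hmono : AntitoneOn w1 (Set.Ioc 0 (γ - b)))
    (hge : ∀ x ∈ Set.Ioc (0 : ℝ) (γ - b), -1 ≤ w1 x)
    (hv' : ∀ u ∈ Set.Ioc b γ, v' u =
      (∫ x in u..γ, Real.exp ((u - x) / b) / b * w1 (x - b)) - Real.exp ((u - γ) / b)) :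
    ∀ u ∈ Set.Ioc b γ,
      v' u - w1 (u - b) ≤ -Real.exp ((u - γ) / b) * (w1 (u - b) + 1) ∧
        -Real.exp ((u - γ) / b) * (w1 (u - b) + 1) ≤ 0 :=
  patient_case_propz_general b γ hb w1 v' hmono hge hv'
end
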